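/- Let T̄ = (T₁,…,T_d) and T̄′ = (T₁′,…,T_d′) be commuting d-tuples of bounded operators on complex Hilbert spaces H and H′ respectively. Then the Dirac operators D_T̄ and D_T̄′ are isomorphic if and only if there is a unitary operator U : H → H′ such that UT_k = T_k′U for every k = 1,…,d. -/

import Mathlib

/-!
The backward direction is immediate: `U ⊗ 1` intertwines `T̄ ⊗ c` with `T̄′ ⊗ c` and
commutes with `1 ⊗ C₀(z)`, hence intertwines `D` and `R`.

Conversely let `W` intertwine the Dirac operators. Since `2 C(z)* = R(z) + i R(iz)`, `W` also
intertwines every `C(z)*`, in particular the annihilators `1 ⊗ c_k*`. Their common kernel is the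
vacuum sector `H ⊗ 1`, so `W` restricts to a unitary `U : H → H′` with `W (x ⊗ 1) = U x ⊗ 1`.
Finally `B* (x ⊗ 1) = 0` and `c_k* c_j 1 = δ_jk 1` give `(1 ⊗ c_k*) D (x ⊗ 1) = T_k x ⊗ 1`;
applying `W` to this identity yields `U T_k = T_k′ U`.
-/

noncomputable section
open ContinuousLinearMap

abbrev Fock (d : ℕ) := EuclideanSpace ℂ (Finset (Fin d))

def createL (d : ℕ) (k : Fin d) : Fock d →ₗ[ℂ] Fock d where
  toFun f := WithLp.toLp 2 fun S =>
    if k ∈ S then ((-1 : ℂ) ^ (S.filter (fun j => j < k)).card) * f (S.erase k) else 0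
  map_add' f g := by
    ext S; by_cases h : k ∈ S <;> simp [h, PiLp.add_apply, mul_add]
  map_smul' c f := by
    ext S; by_cases h : k ∈ S <;> simp [h, PiLp.smul_apply, smul_eq_mul] <;> ring

def create (d : ℕ) (k : Fin d) : Fock d →L[ℂ] Fock d :=
  LinearMap.toContinuousLinearMap (createL d k)

def C0 (d : ℕ) : EuclideanSpace ℂ (Fin d) →ₗ[ℂ] (Fock d →L[ℂ] Fock d) where
  toFun z := ∑ k, z k • create d k
  map_add' z w := by
    rw [← Finset.sum_add_distrib]
    exact Finset.sum_congr rfl fun k _ => add_smul (z k : ℂ) (w k) (create d k)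
  map_smul' c z := by
    show ∑ k, (c • z) k • create d k = c • ∑ k, z k • create d k
    rw [Finset.smul_sum]
    refine Finset.sum_congr rfl fun k _ => ?_
    rw [PiLp.smul_apply, smul_eq_mul, smul_smul]

abbrev FockH (H : Type*) [NormedAddCommGroup H] [InnerProductSpace ℂ H] (d : ℕ) :=
  PiLp 2 (fun _ : Finset (Fin d) => H)

def tensorOp {H : Type*} [NormedAddCommGroup H] [InnerProductSpace ℂ H] {d : ℕ}
    (T : H →L[ℂ] H) (A : Fock d →L[ℂ] Fock d) : FockH H d →L[ℂ] FockH H d :=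
  ((PiLp.continuousLinearEquiv 2 ℂ (fun _ : Finset (Fin d) => H)).symm :
      (∀ _ : Finset (Fin d), H) →L[ℂ] FockH H d) ∘L
    (ContinuousLinearMap.pi fun S : Finset (Fin d) =>
      ∑ S' : Finset (Fin d), (A (EuclideanSpace.single S' 1) S) •
        (T ∘L ContinuousLinearMap.proj S')) ∘L
    ((PiLp.continuousLinearEquiv 2 ℂ (fun _ : Finset (Fin d) => H)) :
      FockH H d →L[ℂ] (∀ _ : Finset (Fin d), H))

variable {H : Type*} [NormedAddCommGroup H] [InnerProductSpace ℂ H] [CompleteSpace H]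

instance fockHComplete {d : ℕ} : CompleteSpace (FockH H d) :=
  inferInstanceAs (CompleteSpace (PiLp 2 (fun _ : Finset (Fin d) => H)))

/-- The Koszul coboundary operator `B = T₁⊗c₁ + ⋯ + T_d⊗c_d` on `H ⊗ Λℂ^d`. -/
def DiracB {d : ℕ} (T : Fin d → H →L[ℂ] H) : FockH H d →L[ℂ] FockH H d :=
  ∑ k, tensorOp (T k) (create d k)

/-- The Dirac operator `D = B + B*` of a commuting `d`-tuple. -/
def DiracD {d : ℕ} (T : Fin d → H →L[ℂ] H) : FockH H d →L[ℂ] FockH H d :=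
  DiracB T + adjoint (DiracB T)

/-- `C(z) = 1_H ⊗ C₀(z)` on `H ⊗ Λℂ^d`. -/
def Cop (H : Type*) [NormedAddCommGroup H] [InnerProductSpace ℂ H] (d : ℕ)
    (z : EuclideanSpace ℂ (Fin d)) : FockH H d →L[ℂ] FockH H d :=
  tensorOp (1 : H →L[ℂ] H) (C0 d z)

/-- The canonical Clifford structure `R(z) = C(z) + C(z)*` on `H ⊗ Λℂ^d`. -/
def Rop (H : Type*) [NormedAddCommGroup H] [InnerProductSpace ℂ H] [CompleteSpace H] (d : ℕ)
    (z : EuclideanSpace ℂ (Fin d)) : FockH H d →L[ℂ] FockH H d :=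
  Cop H d z + adjoint (Cop H d z)

open Function

namespace Function.Semiconj

variable {K K' : Type*} [NormedAddCommGroup K] [InnerProductSpace ℂ K]
  [NormedAddCommGroup K'] [InnerProductSpace ℂ K']

lemma clm_add {F : Type*} [FunLike F K K'] [AddMonoidHomClass F K K'] {W : F}
    {A B : K →L[ℂ] K} {A' B' : K' →L[ℂ] K'} (hA : Semiconj W A A') (hB : Semiconj W B B') :
    Semiconj W ⇑(A + B) ⇑(A' + B') := fun ξ => by
  simp only [add_apply, map_add, hA ξ, hB ξ]

lemma clm_sum {F : Type*} [FunLike F K K'] [AddMonoidHomClass F K K'] {W : F}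
    {ι : Type*} {s : Finset ι} {A : ι → K →L[ℂ] K} {A' : ι → K' →L[ℂ] K'}
    (h : ∀ i ∈ s, Semiconj W (A i) (A' i)) :
    Semiconj W ⇑(∑ i ∈ s, A i) ⇑(∑ i ∈ s, A' i) := fun ξ => by
  simp only [sum_apply, map_sum]
  exact Finset.sum_congr rfl fun i hi => h i hi ξ

variable [CompleteSpace K] [CompleteSpace K'] {W : K ≃ₗᵢ[ℂ] K'} {A : K →L[ℂ] K}
  {A' : K' →L[ℂ] K'}

/-- `2 A* = (A + A*) + i (iA + (iA)*)`, so the real parts of `A` and `iA` determine `A*`. -/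
lemma adjoint_of_add_adjoint (h₁ : Semiconj W ⇑(A + adjoint A) ⇑(A' + adjoint A'))
    (h₂ : Semiconj W ⇑(Complex.I • A + adjoint (Complex.I • A))
      ⇑(Complex.I • A' + adjoint (Complex.I • A'))) :
    Semiconj W (adjoint A) (adjoint A') := fun ξ => by
  have e₁ := h₁ ξ
  have e₂ := h₂ ξ
  simp only [map_smulₛₗ adjoint, Complex.conj_I, add_apply, smul_apply, map_add, map_smul,
    neg_smul, ← sub_eq_add_neg, ← smul_sub, sub_apply, map_sub] at e₁ e₂
  have e₃ := smul_right_injective K' Complex.I_ne_zero e₂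
  refine smul_right_injective K' (two_ne_zero' ℂ) ?_
  linear_combination (norm := module) e₁ - e₃

protected lemma adjoint (h : Semiconj W A A') : Semiconj W (adjoint A) (adjoint A') := fun ξ => by
  refine ext_inner_left ℂ fun v => ?_
  rw [← W.apply_symm_apply v, W.inner_map_map, adjoint_inner_right, adjoint_inner_right,
    ← W.inner_map_map, h, W.apply_symm_apply]

end Function.Semiconj

section FockComponents

variable {E : Type*} [NormedAddCommGroup E] [InnerProductSpace ℂ E] {d : ℕ}

lemma tensorOp_apply (T : E →L[ℂ] E) (A : Fock d →L[ℂ] Fock d) (ξ : FockH E d)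
    (S : Finset (Fin d)) :
    tensorOp T A ξ S = ∑ S', A (EuclideanSpace.single S' 1) S • T (ξ S') := by
  simp [tensorOp, sum_apply]

lemma adjoint_apply_single_apply (A : Fock d →L[ℂ] Fock d) (S S' : Finset (Fin d)) :
    adjoint A (EuclideanSpace.single S' 1) S =
      starRingEnd ℂ (A (EuclideanSpace.single S 1) S') := by
  have h : ∀ (v : Fock d) S, v S = inner ℂ (EuclideanSpace.single S 1) v := by
    simp [EuclideanSpace.inner_single_left]
  rw [h, adjoint_inner_right, ← inner_conj_symm, ← h]

lemma create_single_apply (k : Fin d) (S S' : Finset (Fin d)) :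
    create d k (EuclideanSpace.single S' 1) S =
      if k ∈ S ∧ S.erase k = S' then (-1 : ℂ) ^ (S.filter (fun j => j < k)).card else 0 := by
  by_cases h : k ∈ S <;> simp [create, createL, h, eq_comm]

lemma adjoint_create_single_apply (k : Fin d) (S S' : Finset (Fin d)) :
    adjoint (create d k) (EuclideanSpace.single S' 1) S =
      if k ∉ S ∧ insert k S = S' then (-1 : ℂ) ^ (S'.filter (fun j => j < k)).card else 0 := by
  rw [adjoint_apply_single_apply, create_single_apply]
  have : k ∈ S' ∧ S'.erase k = S ↔ k ∉ S ∧ insert k S = S' := by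
    constructor
    · rintro ⟨hk, rfl⟩
      exact ⟨Finset.notMem_erase k S', Finset.insert_erase hk⟩
    · rintro ⟨hk, rfl⟩
      exact ⟨Finset.mem_insert_self k S, Finset.erase_insert hk⟩
  split_ifs <;> simp_all

lemma tensorOp_create_apply (T : E →L[ℂ] E) (k : Fin d) (ξ : FockH E d) (S : Finset (Fin d)) :
    tensorOp T (create d k) ξ S =
      if k ∈ S then (-1 : ℂ) ^ (S.filter (fun j => j < k)).card • T (ξ (S.erase k)) else 0 := by
  simp only [tensorOp_apply, create_single_apply, ite_smul, zero_smul]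
  split_ifs with h <;> simp [h]

lemma tensorOp_adjoint_create_apply (T : E →L[ℂ] E) (k : Fin d) (ξ : FockH E d)
    (S : Finset (Fin d)) :
    tensorOp T (adjoint (create d k)) ξ S =
      if k ∈ S then 0
      else (-1 : ℂ) ^ ((insert k S).filter (fun j => j < k)).card • T (ξ (insert k S)) := by
  simp only [tensorOp_apply, adjoint_create_single_apply, ite_smul, zero_smul]
  split_ifs with h <;> simp [h]

lemma C0_single (k : Fin d) : C0 d (EuclideanSpace.single k 1) = create d k := by
  rw [C0, LinearMap.coe_mk, AddHom.coe_mk, Finset.sum_eq_single k]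
  · simp
  · intro j _ hj
    rw [PiLp.single_apply, if_neg hj]
    exact zero_smul ℂ (create d j)
  · simp

lemma Cop_smul (c : ℂ) (z : EuclideanSpace ℂ (Fin d)) : Cop E d (c • z) = c • Cop E d z := by
  ext ξ S
  simp [Cop, tensorOp_apply, Finset.smul_sum, mul_smul]

variable (d) in
/-- `x ↦ x ⊗ 1`, where the vacuum `1 ∈ Λ⁰ℂ^d` is the basis vector indexed by `∅`. -/
def vacuum : E →ₗᵢ[ℂ] FockH E d where
  toFun x := (PiLp.single 2 ∅ x : FockH E d)
  map_add' _ _ := PiLp.single_add 2 ∅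
  map_smul' c x := by
    ext S
    by_cases h : S = ∅ <;> simp [h]
  norm_map' := PiLp.norm_single 2 (fun _ : Finset (Fin d) => E) ∅

lemma vacuum_apply (x : E) : vacuum d x = (PiLp.single 2 ∅ x : FockH E d) := rfl

lemma tensorOp_adjoint_create_vacuum (T : E →L[ℂ] E) (k : Fin d) (x : E) :
    tensorOp T (adjoint (create d k)) (vacuum d x) = 0 := by
  ext S
  rw [tensorOp_adjoint_create_apply]
  split_ifs
  · rfl
  · simp [vacuum_apply]

lemma eq_vacuum_of_forall_adjoint_create_eq_zero (ξ : FockH E d)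
    (h : ∀ k, tensorOp 1 (adjoint (create d k)) ξ = 0) : ξ = vacuum d (ξ ∅) := by
  ext S
  rcases S.eq_empty_or_nonempty with rfl | ⟨k, hk⟩
  · simp [vacuum_apply]
  have := congr($(h k) (S.erase k))
  rw [tensorOp_adjoint_create_apply, if_neg (Finset.notMem_erase k S),
    Finset.insert_erase hk] at this
  simp_all [vacuum_apply, Finset.ne_empty_of_mem hk]

lemma tensorOp_create_vacuum (T : E →L[ℂ] E) (k : Fin d) (x : E) :
    tensorOp T (create d k) (vacuum d x) = PiLp.single 2 {k} (T x) := by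
  ext S
  rw [tensorOp_create_apply]
  by_cases hS : S = {k}
  · subst hS
    simp [vacuum_apply, Finset.filter_singleton]
  · have : k ∈ S → S.erase k ≠ ∅ := fun hk h =>
      hS ((Finset.erase_eq_empty_iff S k).mp h |>.resolve_left (Finset.ne_empty_of_mem hk))
    split_ifs with hk <;> simp [vacuum_apply, hS, this, hk]

lemma tensorOp_adjoint_create_single_singleton (T : E →L[ℂ] E) (j k : Fin d) (y : E) :
    tensorOp T (adjoint (create d k)) (PiLp.single 2 {j} y) =
      if j = k then vacuum d (T y) else 0 := by
  ext S
  rw [tensorOp_adjoint_create_apply]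
  rcases eq_or_ne j k with rfl | hjk
  · rw [if_pos rfl, vacuum_apply]
    by_cases hj : j ∈ S
    · simp [hj, Finset.ne_empty_of_mem hj]
    rcases S.eq_empty_or_nonempty with rfl | hS
    · simp [Finset.filter_singleton]
    have : insert j S ≠ {j} := fun h => hS.ne_empty <|
      (Finset.subset_singleton_iff.mp (h ▸ Finset.subset_insert j S)).resolve_right
        fun h' => hj (h' ▸ Finset.mem_singleton_self j)
    simp [hj, this, hS.ne_empty]
  · have : ∀ S : Finset (Fin d), insert k S ≠ {j} := fun S h =>
      hjk (Finset.mem_singleton.mp (h ▸ Finset.mem_insert_self k S)).symm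
    simp [hjk, this]

lemma DiracB_vacuum (T : Fin d → E →L[ℂ] E) (x : E) :
    DiracB T (vacuum d x) = ∑ k, PiLp.single 2 {k} (T k x) := by
  simp only [DiracB, sum_apply, tensorOp_create_vacuum]

end FockComponents

section Adjoints

variable {d : ℕ}

lemma adjoint_tensorOp (T : H →L[ℂ] H) (A : Fock d →L[ℂ] Fock d) :
    adjoint (tensorOp T A) = tensorOp (adjoint T) (adjoint A) := by
  refine ((eq_adjoint_iff _ _).mpr fun ξ η => ?_).symm
  simp only [PiLp.inner_apply, tensorOp_apply, sum_inner, inner_sum, inner_smul_left,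
    inner_smul_right, adjoint_apply_single_apply, adjoint_inner_left, starRingEnd_self_apply]
  exact Finset.sum_comm

lemma adjoint_DiracB_vacuum (T : Fin d → H →L[ℂ] H) (x : H) :
    adjoint (DiracB T) (vacuum d x) = 0 := by
  simp only [DiracB, map_sum, adjoint_tensorOp, sum_apply, tensorOp_adjoint_create_vacuum,
    Finset.sum_const_zero]

lemma tensorOp_adjoint_create_DiracD_vacuum (T : Fin d → H →L[ℂ] H) (k : Fin d) (x : H) :
    tensorOp 1 (adjoint (create d k)) (DiracD T (vacuum d x)) = vacuum d (T k x) := by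
  simp only [DiracD, add_apply, adjoint_DiracB_vacuum, add_zero, DiracB_vacuum, map_sum,
    tensorOp_adjoint_create_single_singleton, one_apply_eq_self, Finset.sum_ite_eq', Finset.mem_univ,
    if_true]

lemma adjoint_Cop_single (k : Fin d) :
    adjoint (Cop H d (EuclideanSpace.single k 1)) = tensorOp 1 (adjoint (create d k)) := by
  rw [Cop, C0_single, adjoint_tensorOp, adjoint_one]

end Adjoints

section FockUnitaries

variable {E E' : Type*} [NormedAddCommGroup E] [InnerProductSpace ℂ E]
  [NormedAddCommGroup E'] [InnerProductSpace ℂ E'] {d : ℕ}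

def fockCongr (U : E ≃ₗᵢ[ℂ] E') (d : ℕ) : FockH E d ≃ₗᵢ[ℂ] FockH E' d :=
  LinearIsometryEquiv.piLpCongrRight 2 fun _ => U

lemma fockCongr_semiconj_tensorOp (U : E ≃ₗᵢ[ℂ] E') {T : E →L[ℂ] E} {T' : E' →L[ℂ] E'}
    (hU : Semiconj U T T') (A : Fock d →L[ℂ] Fock d) :
    Semiconj (fockCongr U d) (tensorOp T A) (tensorOp T' A) := fun ξ => by
  ext S
  simp only [fockCongr, LinearIsometryEquiv.piLpCongrRight_apply, tensorOp_apply, map_sum,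
    map_smul, hU _]

def IntertwinesAnnihilators (W : FockH E d ≃ₗᵢ[ℂ] FockH E' d) : Prop :=
  ∀ k, Semiconj W (tensorOp 1 (adjoint (create d k))) (tensorOp 1 (adjoint (create d k)))

lemma map_vacuum_eq_vacuum (W : FockH E d ≃ₗᵢ[ℂ] FockH E' d) (hW : IntertwinesAnnihilators W)
    (x : E) : W (vacuum d x) = vacuum d (W (vacuum d x) ∅) :=
  eq_vacuum_of_forall_adjoint_create_eq_zero _ fun k => by
    rw [← hW k, tensorOp_adjoint_create_vacuum, map_zero]

def vacuumIsometry (W : FockH E d ≃ₗᵢ[ℂ] FockH E' d) (hW : IntertwinesAnnihilators W) :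
    E →ₗᵢ[ℂ] E' where
  toFun x := W (vacuum d x) ∅
  map_add' x y := by simp only [map_add, PiLp.add_apply]
  map_smul' c x := by simp only [map_smul, PiLp.smul_apply, RingHom.id_apply]
  norm_map' x := by
    change ‖W (vacuum d x) ∅‖ = ‖x‖
    rw [← (vacuum d).norm_map, ← map_vacuum_eq_vacuum W hW, W.norm_map, (vacuum d).norm_map]

lemma vacuumIsometry_surjective (W : FockH E d ≃ₗᵢ[ℂ] FockH E' d)
    (hW : IntertwinesAnnihilators W) : Surjective (vacuumIsometry W hW) := fun y => by
  have hW' k := (hW k).inverse_left W.symm_apply_apply W.apply_symm_apply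
  refine ⟨W.symm (vacuum d y) ∅, ?_⟩
  change W (vacuum d _) ∅ = y
  rw [← map_vacuum_eq_vacuum W.symm hW', W.apply_symm_apply, vacuum_apply, PiLp.single_eq_same]

def vacuumEquiv (W : FockH E d ≃ₗᵢ[ℂ] FockH E' d) (hW : IntertwinesAnnihilators W) :
    E ≃ₗᵢ[ℂ] E' :=
  LinearIsometryEquiv.ofSurjective _ (vacuumIsometry_surjective W hW)

lemma map_vacuum (W : FockH E d ≃ₗᵢ[ℂ] FockH E' d) (hW : IntertwinesAnnihilators W) (x : E) :
    W (vacuum d x) = vacuum d (vacuumEquiv W hW x) :=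
  map_vacuum_eq_vacuum W hW x

end FockUnitaries

section DiracIso

variable {d : ℕ} {H' : Type*} [NormedAddCommGroup H'] [InnerProductSpace ℂ H'] [CompleteSpace H']

lemma intertwinesAnnihilators_of_semiconj_Rop (W : FockH H d ≃ₗᵢ[ℂ] FockH H' d)
    (hR : ∀ z, Semiconj W (Rop H d z) (Rop H' d z)) : IntertwinesAnnihilators W := fun k => by
  have hC z : Semiconj W (adjoint (Cop H d z)) (adjoint (Cop H' d z)) :=
    (hR z).adjoint_of_add_adjoint (by simpa only [Rop, Cop_smul] using hR (Complex.I • z))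
  simpa only [adjoint_Cop_single] using hC (EuclideanSpace.single k 1)

lemma vacuumEquiv_semiconj (W : FockH H d ≃ₗᵢ[ℂ] FockH H' d) (hW : IntertwinesAnnihilators W)
    {T : Fin d → H →L[ℂ] H} {T' : Fin d → H' →L[ℂ] H'} (hD : Semiconj W (DiracD T) (DiracD T'))
    (k : Fin d) : Semiconj (vacuumEquiv W hW) (T k) (T' k) := fun x => (vacuum d).injective <|
  calc vacuum d (vacuumEquiv W hW (T k x))
      = W (tensorOp 1 (adjoint (create d k)) (DiracD T (vacuum d x))) := by
        rw [← map_vacuum, tensorOp_adjoint_create_DiracD_vacuum]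
    _ = tensorOp 1 (adjoint (create d k)) (DiracD T' (vacuum d (vacuumEquiv W hW x))) := by
        rw [hW k, hD, map_vacuum W hW]
    _ = vacuum d (T' k (vacuumEquiv W hW x)) := tensorOp_adjoint_create_DiracD_vacuum T' k _

lemma fockCongr_semiconj_DiracD (U : H ≃ₗᵢ[ℂ] H') {T : Fin d → H →L[ℂ] H}
    {T' : Fin d → H' →L[ℂ] H'} (hU : ∀ k, Semiconj U (T k) (T' k)) :
    Semiconj (fockCongr U d) (DiracD T) (DiracD T') :=
  have hB : Semiconj (fockCongr U d) (DiracB T) (DiracB T') :=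
    Semiconj.clm_sum fun k _ => fockCongr_semiconj_tensorOp U (hU k) _
  hB.clm_add hB.adjoint

lemma fockCongr_semiconj_Rop (U : H ≃ₗᵢ[ℂ] H') (z : EuclideanSpace ℂ (Fin d)) :
    Semiconj (fockCongr U d) (Rop H d z) (Rop H' d z) :=
  have hC : Semiconj (fockCongr U d) (Cop H d z) (Cop H' d z) :=
    fockCongr_semiconj_tensorOp U (fun _ => rfl) _
  hC.clm_add hC.adjoint

end DiracIso

theorem arveson_stmt11_general {d : ℕ} {H' : Type*} [NormedAddCommGroup H'] [InnerProductSpace ℂ H']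
    [CompleteSpace H'] (T : Fin d → H →L[ℂ] H) (T' : Fin d → H' →L[ℂ] H') :
    (∃ W : FockH H d ≃ₗᵢ[ℂ] FockH H' d,
        (∀ ξ, W (DiracD T ξ) = DiracD T' (W ξ)) ∧
        (∀ z ξ, W (Rop H d z ξ) = Rop H' d z (W ξ))) ↔
    (∃ U : H ≃ₗᵢ[ℂ] H', ∀ k ξ, U (T k ξ) = T' k (U ξ)) := by
  constructor
  · rintro ⟨W, hD, hR⟩
    have hW := intertwinesAnnihilators_of_semiconj_Rop W hR
    exact ⟨vacuumEquiv W hW, vacuumEquiv_semiconj W hW hD⟩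
  · rintro ⟨U, hU⟩
    exact ⟨fockCongr U d, fockCongr_semiconj_DiracD U hU, fockCongr_semiconj_Rop U⟩

/-- **Theorem A, uniqueness.** The Dirac operators of two commuting
`d`-tuples are isomorphic iff the tuples are unitarily equivalent. -/
theorem arveson_stmt11 {d : ℕ} {H' : Type*} [NormedAddCommGroup H'] [InnerProductSpace ℂ H']
    [CompleteSpace H'] (T : Fin d → H →L[ℂ] H) (T' : Fin d → H' →L[ℂ] H')
    (hT : ∀ i j, T i * T j = T j * T i) (hT' : ∀ i j, T' i * T' j = T' j * T' i) :
    (∃ W : FockH H d ≃ₗᵢ[ℂ] FockH H' d,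
        (∀ ξ, W (DiracD T ξ) = DiracD T' (W ξ)) ∧
        (∀ z ξ, W (Rop H d z ξ) = Rop H' d z (W ξ))) ↔
    (∃ U : H ≃ₗᵢ[ℂ] H', ∀ k ξ, U (T k ξ) = T' k (U ξ)) :=
  arveson_stmt11_general T T'

end
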